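/- Let α ∈ (0, 1/2) and define the mean-absolute-difference total egalitarian value V_α(X) = Tot(X) − α·MAD(X)·|X|. Let Z₀ be a fixed population, and define the weighting function f(w) = w − 2α·MAD(w, Z₀) + α·MAD(Z₀), where MAD(w, Z₀) = Σ_x (Z₀(x)/|Z₀|)·|x − w|. Then for all populations X and Y with Σ_w X(w)·f(w) > Σ_w Y(w)·f(w), there exists N ∈ ℕ such that V_α(X + n·Z₀) > V_α(Y + n·Z₀) for every integer n ≥ N. -/

import Mathlib

/-- The size of a population: total number of welfare subjects. -/
noncomputable def psize (X : ℝ →₀ ℕ) : ℕ := X.sum fun _ n => n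

/-- Total welfare of a population. -/
noncomputable def ptot (X : ℝ →₀ ℕ) : ℝ := X.sum fun w n => (n : ℝ) * w

/-- Average welfare of a population. -/
noncomputable def pavg (X : ℝ →₀ ℕ) : ℝ := ptot X / (psize X : ℝ)

/-- Critical-level utilitarian value with critical level `c`. -/
noncomputable def vcl (c : ℝ) (X : ℝ →₀ ℕ) : ℝ := ptot X - c * (psize X : ℝ)

/-- Mean absolute difference of welfare in a population. -/
noncomputable def mad (X : ℝ →₀ ℕ) : ℝ :=
  (X.sum fun v m => X.sum fun w n => (m : ℝ) * (n : ℝ) * |v - w|) / ((psize X : ℝ) ^ 2)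

/-- Average distance between a welfare level `w` and the welfare levels in `Z`. -/
noncomputable def madTo (w : ℝ) (Z : ℝ →₀ ℕ) : ℝ :=
  Z.sum fun x n => ((n : ℝ) / (psize Z : ℝ)) * |x - w|

/-! Write `D(X, Y) = Σ X(v) Y(w) |v - w|`, so that `V_α(X) = Tot X - α D(X, X) / |X|`. As `D` is
bilinear and symmetric, `D(P + nZ, P + nZ) = D(P, P) + 2n D(P, Z) + n² D(Z, Z)`, and dividing by
`|P| + n|Z|` shows that `V_α(P + nZ) - n V_α(Z)` converges to
`Tot P - 2α D(P, Z) / |Z| + α MAD(Z) |P| = Σ_w P(w) f(w)`. Hence `V_α(X + nZ) - V_α(Y + nZ)`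
tends to `Σ_w X(w) f(w) - Σ_w Y(w) f(w) > 0`. -/

open Filter Topology

noncomputable def psum (g : ℝ → ℝ) (X : ℝ →₀ ℕ) : ℝ := X.sum fun w n => (n : ℝ) * g w

section psum

variable (g h : ℝ → ℝ) (X Y : ℝ →₀ ℕ)

lemma psum_add : psum g (X + Y) = psum g X + psum g Y :=
  Finsupp.sum_add_index' (fun _ => by simp) (fun _ _ _ => by push_cast; ring)

lemma psum_nsmul (n : ℕ) : psum g (n • X) = n * psum g X := by
  induction n with
  | zero => simp [psum]
  | succ n ih => rw [succ_nsmul, psum_add, ih]; push_cast; ring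

lemma psum_add_fun : psum (fun w => g w + h w) X = psum g X + psum h X := by
  simp only [psum, mul_add, Finsupp.sum_add]

lemma psum_sub_fun : psum (fun w => g w - h w) X = psum g X - psum h X := by
  simp only [psum, mul_sub, Finsupp.sum_sub]

lemma psum_const_mul (c : ℝ) : psum (fun w => c * g w) X = c * psum g X := by
  simp only [psum, Finsupp.mul_sum, mul_left_comm]

lemma psum_div_const (c : ℝ) : psum (fun w => g w / c) X = psum g X / c := by
  simp only [psum, div_eq_mul_inv, Finsupp.sum_mul, mul_assoc]

lemma psum_comm (k : ℝ → ℝ → ℝ) :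
    psum (fun v => psum (k v) Y) X = psum (fun w => psum (fun v => k v w) X) Y := by
  simp only [psum, Finsupp.mul_sum]
  rw [Finsupp.sum_comm]
  simp only [mul_left_comm]

lemma natCast_psize : (psize X : ℝ) = psum (fun _ => 1) X := by
  simp [psize, psum]

lemma ptot_eq_psum : ptot X = psum (fun w => w) X := rfl

end psum

noncomputable def sumAbsDiff (X Y : ℝ →₀ ℕ) : ℝ := psum (fun v => psum (fun w => |v - w|) Y) X

section sumAbsDiff

variable (X Y Z : ℝ →₀ ℕ)

lemma sumAbsDiff_comm : sumAbsDiff X Y = sumAbsDiff Y X := by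
  simp only [sumAbsDiff, psum_comm X Y, abs_sub_comm]

lemma sumAbsDiff_add_left : sumAbsDiff (X + Y) Z = sumAbsDiff X Z + sumAbsDiff Y Z :=
  psum_add _ X Y

lemma sumAbsDiff_nsmul_left (n : ℕ) : sumAbsDiff (n • X) Y = n * sumAbsDiff X Y :=
  psum_nsmul _ X n

lemma sumAbsDiff_add_nsmul_self (n : ℕ) :
    sumAbsDiff (X + n • Y) (X + n • Y)
      = sumAbsDiff X X + 2 * n * sumAbsDiff X Y + n ^ 2 * sumAbsDiff Y Y := by
  have hright : ∀ Z, sumAbsDiff Z (X + n • Y) = sumAbsDiff Z X + n * sumAbsDiff Z Y := fun Z => by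
    rw [sumAbsDiff_comm, sumAbsDiff_add_left, sumAbsDiff_nsmul_left, sumAbsDiff_comm X,
      sumAbsDiff_comm Y]
  rw [sumAbsDiff_add_left, sumAbsDiff_nsmul_left, hright, hright, sumAbsDiff_comm Y X]
  ring

lemma mad_eq_sumAbsDiff : mad X = sumAbsDiff X X / (psize X : ℝ) ^ 2 := by
  simp only [mad, sumAbsDiff, psum, Finsupp.mul_sum, mul_assoc]

lemma madTo_eq_psum (w : ℝ) : madTo w Z = psum (fun x => |x - w|) Z / psize Z := by
  simp only [madTo, psum, div_eq_mul_inv, Finsupp.sum_mul]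
  exact congrArg _ (funext₂ fun _ _ => by ring)

lemma psum_madTo : psum (fun w => madTo w Z) X = sumAbsDiff X Z / psize Z := by
  simp only [madTo_eq_psum, psum_div_const, sumAbsDiff, abs_sub_comm]

end sumAbsDiff

lemma ptot_add_nsmul (X Y : ℝ →₀ ℕ) (n : ℕ) : ptot (X + n • Y) = ptot X + n * ptot Y := by
  rw [ptot_eq_psum, psum_add, psum_nsmul]; rfl

lemma psize_add_nsmul (X Y : ℝ →₀ ℕ) (n : ℕ) :
    (psize (X + n • Y) : ℝ) = psize X + n * psize Y := by
  rw [natCast_psize, psum_add, psum_nsmul, ← natCast_psize, ← natCast_psize]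

lemma psize_pos {X : ℝ →₀ ℕ} (hX : X ≠ 0) : 0 < psize X := by
  obtain ⟨w, hw⟩ := Finsupp.ne_iff.mp hX
  exact Finset.sum_pos' (fun _ _ => Nat.zero_le _)
    ⟨w, Finsupp.mem_support_iff.mpr hw, Nat.pos_of_ne_zero hw⟩

lemma tendsto_quadratic_div_linear_sub (a b c p : ℝ) {z : ℝ} (hz : 0 < z) :
    Tendsto (fun n : ℕ => (c * n ^ 2 + b * n + a) / (p + n * z) - c / z * n) atTop
      (𝓝 ((b - c * p / z) / z)) := by
  have hden : Tendsto (fun n : ℕ => p + n * z) atTop atTop :=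
    tendsto_atTop_add_const_left _ p (tendsto_natCast_atTop_atTop.atTop_mul_const hz)
  have hrem := (tendsto_const_nhds (x := a - p * ((b - c * p / z) / z))).div_atTop hden
  rw [← add_zero ((b - c * p / z) / z)]
  refine (tendsto_const_nhds.add hrem).congr' ?_
  filter_upwards [hden.eventually_gt_atTop 0] with n hn
  rw [div_add_div _ _ hz.ne' hn.ne', div_sub' hn.ne', div_eq_div_iff (by positivity) hn.ne']
  field_simp
  ring

noncomputable def egalValue (α : ℝ) (X : ℝ →₀ ℕ) : ℝ := ptot X - α * mad X * psize X

noncomputable def madWeight (α : ℝ) (Z : ℝ →₀ ℕ) (w : ℝ) : ℝ :=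
  w - 2 * α * madTo w Z + α * mad Z

lemma egalValue_eq (α : ℝ) (X : ℝ →₀ ℕ) :
    egalValue α X = ptot X - α * (sumAbsDiff X X / psize X) := by
  rcases eq_or_ne (psize X : ℝ) 0 with h | h
  · simp [egalValue, mad_eq_sumAbsDiff, h]
  · rw [egalValue, mad_eq_sumAbsDiff]; field_simp

lemma psum_madWeight (α : ℝ) (Z X : ℝ →₀ ℕ) :
    psum (madWeight α Z) X
      = ptot X - 2 * α * (sumAbsDiff X Z / psize Z) + α * mad Z * psize X := by
  change psum (fun w => w - 2 * α * madTo w Z + α * mad Z) X = _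
  rw [psum_add_fun, psum_sub_fun, psum_const_mul, psum_madTo, ← ptot_eq_psum, natCast_psize X,
    ← psum_const_mul, mul_one]

theorem tendsto_egalValue_add_nsmul_sub (α : ℝ) {Z : ℝ →₀ ℕ} (hZ : Z ≠ 0) (P : ℝ →₀ ℕ) :
    Tendsto (fun n : ℕ => egalValue α (P + n • Z) - n * egalValue α Z) atTop
      (𝓝 (psum (madWeight α Z) P)) := by
  have hz : (0 : ℝ) < psize Z := by exact_mod_cast psize_pos hZ
  have hlim := (tendsto_quadratic_div_linear_sub (sumAbsDiff P P) (2 * sumAbsDiff P Z)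
    (sumAbsDiff Z Z) (psize P) hz).const_mul α |>.const_sub (ptot P)
  convert hlim using 2 with n
  · rw [egalValue_eq, egalValue_eq, ptot_add_nsmul, psize_add_nsmul, sumAbsDiff_add_nsmul_self]
    ring
  · rw [psum_madWeight, mad_eq_sumAbsDiff]
    field_simp
    ring

theorem stmt_10_general (α : ℝ)
    (V : (ℝ →₀ ℕ) → ℝ)
    (hV : ∀ X : ℝ →₀ ℕ, V X = ptot X - α * mad X * (psize X : ℝ))
    (Z₀ : ℝ →₀ ℕ) (hZ₀ : Z₀ ≠ 0)
    (f : ℝ → ℝ)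
    (hf : ∀ w : ℝ, f w = w - 2 * α * madTo w Z₀ + α * mad Z₀)
    (X Y : ℝ →₀ ℕ)
    (hfsum : X.sum (fun w n => (n : ℝ) * f w) > Y.sum (fun w n => (n : ℝ) * f w)) :
    ∃ N : ℕ, ∀ n : ℕ, n ≥ N → V (X + n • Z₀) > V (Y + n • Z₀) := by
  obtain rfl : V = egalValue α := funext hV
  obtain rfl : f = madWeight α Z₀ := funext hf
  have hlim :=
    (tendsto_egalValue_add_nsmul_sub α hZ₀ X).sub (tendsto_egalValue_add_nsmul_sub α hZ₀ Y)
  have hpos : ∀ᶠ n : ℕ in atTop, 0 < egalValue α (X + n • Z₀) - egalValue α (Y + n • Z₀) := by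
    filter_upwards [hlim.eventually (eventually_gt_nhds (sub_pos.mpr hfsum))] with n hn
    linarith
  obtain ⟨N, hN⟩ := eventually_atTop.mp hpos
  exact ⟨N, fun n hn => sub_pos.mp (hN n hn)⟩

theorem stmt_10 (α : ℝ) (hα0 : 0 < α) (hα1 : α < 1 / 2)
    (V : (ℝ →₀ ℕ) → ℝ)
    (hV : ∀ X : ℝ →₀ ℕ, V X = ptot X - α * mad X * (psize X : ℝ))
    (Z₀ : ℝ →₀ ℕ) (hZ₀ : Z₀ ≠ 0)
    (f : ℝ → ℝ)
    (hf : ∀ w : ℝ, f w = w - 2 * α * madTo w Z₀ + α * mad Z₀)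
    (X Y : ℝ →₀ ℕ) (hX : X ≠ 0) (hY : Y ≠ 0)
    (hfsum : X.sum (fun w n => (n : ℝ) * f w) > Y.sum (fun w n => (n : ℝ) * f w)) :
    ∃ N : ℕ, ∀ n : ℕ, n ≥ N → V (X + n • Z₀) > V (Y + n • Z₀) :=
  stmt_10_general α V hV Z₀ hZ₀ f hf X Y hfsum
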